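/- In any once-appearance branching program computing the disjunction f(z) = ⋁_{i∈[n]} z_i, every node v reachable from the source computes the function ⋁_{i∈S(v)} z_i, where S(v) is the set of indices of the z-variables labeling nodes that do not precede v in any fixed topological order of the program; in particular the sets S(v) over reachable z-labeled nodes form a chain under inclusion. -/
import Mathlib


/-- A deterministic branching program over `{0,1}` on `n` variables. Nodes are
numbered so that every edge goes to a strictly larger index (this fixes a
topological order and guarantees acyclicity). `Sum.inr b` denotes the `b`-sink. -/
structure BP (n : ℕ) where
  size : ℕ
  label : Fin size → Fin n
  next : Fin size → Bool → Fin size ⊕ Bool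
  source : Fin size ⊕ Bool
  wf : ∀ i b j, next i b = Sum.inl j → i < j

namespace BP

variable {n : ℕ}

/-- Fuel-based evaluation (the fuel `B.size` always suffices thanks to `wf`). -/
def evalAux (B : BP n) (x : Fin n → Bool) : ℕ → Fin B.size ⊕ Bool → Bool
  | _, Sum.inr b => b
  | 0, Sum.inl _ => false
  | k + 1, Sum.inl i => B.evalAux x k (B.next i (x (B.label i)))

/-- The Boolean value computed by the branching program on input `x`. -/
def eval (B : BP n) (x : Fin n → Bool) : Bool :=
  B.evalAux x B.size B.source

/-- `B` computes the total Boolean function `f`. -/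
def Computes (B : BP n) (f : (Fin n → Bool) → Bool) : Prop :=
  ∀ x, B.eval x = f x

/-- A once-appearance branching program: all node labels are distinct. -/
def IsOA (B : BP n) : Prop :=
  Function.Injective B.label

end BP

namespace BP

variable {n : ℕ}

/-- The function computed by treating node `v` as the source. -/
def evalFrom (B : BP n) (x : Fin n → Bool) (v : Fin B.size) : Bool :=
  B.evalAux x B.size (Sum.inl v)

/-- One step along an edge between non-sink nodes. -/
def Step (B : BP n) (u v : Fin B.size) : Prop :=
  ∃ b, B.next u b = Sum.inl v

/-- Node `v` is reachable from the source. -/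
def ReachableNode (B : BP n) (v : Fin B.size) : Prop :=
  ∃ s, B.source = Sum.inl s ∧ Relation.ReflTransGen B.Step s v

end BP

/-- The disjunction `⋁_{i ∈ [n]} z i` of all `n` variables. -/
def bigOr (n : ℕ) (x : Fin n → Bool) : Bool :=
  decide (∃ i : Fin n, x i = true)

namespace BP

variable {n : ℕ}

lemma evalAux_inr (B : BP n) (x : Fin n → Bool) (k : ℕ) (b : Bool) :
    B.evalAux x k (Sum.inr b) = b := by
  cases k <;> rfl

lemma evalAux_succ (B : BP n) (x : Fin n → Bool) :
    ∀ (k : ℕ) (v : Fin B.size), B.size - v.val ≤ k →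
      B.evalAux x (k + 1) (Sum.inl v) = B.evalAux x k (Sum.inl v)
  | 0, v, h => absurd h (by have := v.isLt; omega)
  | k + 1, v, h => by
    show B.evalAux x (k + 1) (B.next v (x (B.label v)))
        = B.evalAux x k (B.next v (x (B.label v)))
    cases hn : B.next v (x (B.label v)) with
    | inr b => rw [evalAux_inr, evalAux_inr]
    | inl w =>
      have hw : v < w := B.wf v _ w hn
      have hw' : v.val < w.val := hw
      exact evalAux_succ B x k w (by have := w.isLt; omega)

lemma evalAux_add (B : BP n) (x : Fin n → Bool) :
    ∀ (j k : ℕ) (v : Fin B.size), B.size - v.val ≤ k →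
      B.evalAux x (k + j) (Sum.inl v) = B.evalAux x k (Sum.inl v)
  | 0, k, v, _ => rfl
  | j + 1, k, v, h => by
    have h1 : k + (j + 1) = (k + j) + 1 := by omega
    rw [h1, evalAux_succ B x (k + j) v (by omega), evalAux_add B x j k v h]

lemma evalAux_eq_evalFrom (B : BP n) (x : Fin n → Bool) (k : ℕ) (v : Fin B.size)
    (h : B.size - v.val ≤ k) : B.evalAux x k (Sum.inl v) = B.evalFrom x v := by
  have hv := v.isLt
  unfold evalFrom
  have e1 : B.evalAux x k (Sum.inl v)
      = B.evalAux x ((B.size - v.val) + (k - (B.size - v.val))) (Sum.inl v) := by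
    congr 1; omega
  have e2 : B.evalAux x B.size (Sum.inl v)
      = B.evalAux x ((B.size - v.val) + v.val) (Sum.inl v) := by
    congr 1; omega
  rw [e1, evalAux_add B x _ _ v (le_refl _), e2, evalAux_add B x _ _ v (le_refl _)]

lemma evalAux_congr_input (B : BP n) (x y : Fin n → Bool) :
    ∀ (k : ℕ) (v : Fin B.size), B.size - v.val ≤ k →
      (∀ u : Fin B.size, v ≤ u → x (B.label u) = y (B.label u)) →
      B.evalAux x k (Sum.inl v) = B.evalAux y k (Sum.inl v)
  | 0, v, h, _ => absurd h (by have := v.isLt; omega)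
  | k + 1, v, h, hxy => by
    show B.evalAux x k (B.next v (x (B.label v)))
        = B.evalAux y k (B.next v (y (B.label v)))
    rw [hxy v (le_refl v)]
    cases hn : B.next v (y (B.label v)) with
    | inr b => rw [evalAux_inr, evalAux_inr]
    | inl w =>
      have hw : v < w := B.wf v _ w hn
      have hw' : v.val < w.val := hw
      exact evalAux_congr_input B x y k w (by have := w.isLt; omega)
        (fun u hu => hxy u (le_of_lt (lt_of_lt_of_le hw hu)))

lemma evalFrom_congr (B : BP n) (x y : Fin n → Bool) (v : Fin B.size)
    (h : ∀ u : Fin B.size, v ≤ u → x (B.label u) = y (B.label u)) :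
    B.evalFrom x v = B.evalFrom y v :=
  evalAux_congr_input B x y B.size v (by omega) h

lemma evalFrom_step (B : BP n) (x : Fin n → Bool) {v w : Fin B.size} {b : Bool}
    (hb : x (B.label v) = b) (hn : B.next v b = Sum.inl w) :
    B.evalFrom x v = B.evalFrom x w := by
  have hv := v.isLt
  have hw : v < w := B.wf v b w hn
  have hw' : v.val < w.val := hw
  unfold evalFrom
  have hsz : B.evalAux x B.size (Sum.inl v)
      = B.evalAux x ((B.size - 1) + 1) (Sum.inl v) := by congr 1; omega
  rw [hsz]
  show B.evalAux x (B.size - 1) (B.next v (x (B.label v))) = _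
  rw [hb, hn]
  exact evalAux_eq_evalFrom B x (B.size - 1) w (by have := w.isLt; omega)

lemma evalFrom_sink (B : BP n) (x : Fin n → Bool) {v : Fin B.size} {b c : Bool}
    (hb : x (B.label v) = b) (hn : B.next v b = Sum.inr c) :
    B.evalFrom x v = c := by
  have hv := v.isLt
  unfold evalFrom
  have hsz : B.evalAux x B.size (Sum.inl v)
      = B.evalAux x ((B.size - 1) + 1) (Sum.inl v) := by congr 1; omega
  rw [hsz]
  show B.evalAux x (B.size - 1) (B.next v (x (B.label v))) = _
  rw [hb, hn, evalAux_inr]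

lemma eval_source (B : BP n) (x : Fin n → Bool) {s : Fin B.size}
    (hs : B.source = Sum.inl s) : B.eval x = B.evalFrom x s := by
  unfold eval evalFrom; rw [hs]

/-- The key structural lemma: in an oaBP computing the big OR, *every* node `v`
computes the OR of the variables labelling nodes `u ≥ v`. -/
lemma main_structure (B : BP n) (hoa : B.IsOA) (hcomp : B.Computes (bigOr n)) :
    ∀ v : Fin B.size, ∀ x,
      B.evalFrom x v = decide (∃ u : Fin B.size, v ≤ u ∧ x (B.label u) = true) := by
  rcases Nat.eq_zero_or_pos n with hn | hn
  · intro v _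
    subst hn
    exact (B.label v).elim0
  -- the source must be a node
  obtain ⟨s, hs⟩ : ∃ s : Fin B.size, B.source = Sum.inl s := by
    cases hsrc : B.source with
    | inl s => exact ⟨s, rfl⟩
    | inr c =>
      have h0 := hcomp (fun _ => false)
      have h1 := hcomp (fun _ => true)
      unfold eval at h0 h1
      rw [hsrc, evalAux_inr] at h0 h1
      have hb0 : bigOr n (fun _ => false) = false := by simp [bigOr]
      have hb1 : bigOr n (fun _ => true) = true := by
        have : ∃ i : Fin n, (fun _ => true : Fin n → Bool) i = true := ⟨⟨0, hn⟩, rfl⟩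
        simpa [bigOr] using this
      rw [hb0] at h0; rw [hb1] at h1
      exact absurd (h0.symm.trans h1) (by simp)
  have hevalS : ∀ x, B.evalFrom x s = bigOr n x := fun x => by
    rw [← eval_source B x hs]; exact hcomp x
  -- every variable occurs as a label of a node `≥ s`
  have hsurj : ∀ a : Fin n, ∃ u : Fin B.size, s ≤ u ∧ B.label u = a := by
    intro a
    by_contra hc
    push_neg at hc
    have h1 : B.evalFrom (fun i => decide (i = a)) s
        = B.evalFrom (fun _ => false) s := by
      apply evalFrom_congr
      intro u hu
      simpa using hc u hu
    rw [hevalS, hevalS] at h1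
    have hL : bigOr n (fun i => decide (i = a)) = true := by
      simp [bigOr]
    have hR : bigOr n (fun _ => false) = false := by simp [bigOr]
    rw [hL, hR] at h1
    exact absurd h1 (by simp)
  -- counting: s = 0 and size = n
  have hsize_le : B.size ≤ n := by
    simpa using Fintype.card_le_of_injective B.label hoa
  have hcard : n ≤ B.size - s.val := by
    classical
    have hmaps : ∀ a : Fin n, (hsurj a).choose ∈ Finset.Ici s :=
      fun a => Finset.mem_Ici.2 (hsurj a).choose_spec.1
    have hinj : ∀ a ∈ (Finset.univ : Finset (Fin n)), ∀ b ∈ Finset.univ,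
        (hsurj a).choose = (hsurj b).choose → a = b := by
      intro a _ b _ hab
      rw [← (hsurj a).choose_spec.2, ← (hsurj b).choose_spec.2, hab]
    have := Finset.card_le_card_of_injOn (fun a => (hsurj a).choose)
      (fun a _ => hmaps a) hinj
    simpa [Fin.card_Ici] using this
  have hs0 : s.val = 0 := by omega
  -- the inductive claim, by induction on the node index
  have C : ∀ i : ℕ, ∀ hi : i < B.size, ∀ x,
      B.evalFrom x ⟨i, hi⟩ = decide (∃ u : Fin B.size, ⟨i, hi⟩ ≤ u ∧ x (B.label u) = true) := by
    intro i
    induction i with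
    | zero =>
      intro hi x
      have hse : s = ⟨0, hi⟩ := Fin.ext hs0
      rw [← hse, hevalS]
      unfold bigOr
      congr 1
      apply propext
      constructor
      · rintro ⟨a, ha⟩
        obtain ⟨u, hu, hlu⟩ := hsurj a
        exact ⟨u, hse ▸ hu, by rw [hlu]; exact ha⟩
      · rintro ⟨u, _, hu⟩
        exact ⟨B.label u, hu⟩
    | succ i IH =>
      intro hi x
      have hi' : i < B.size := by omega
      set v : Fin B.size := ⟨i, hi'⟩ with hv
      set v' : Fin B.size := ⟨i + 1, hi⟩ with hv'
      have hvv' : v < v' := by simp [hv, hv', Fin.lt_def]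
      cases hnext : B.next v false with
      | inr c =>
        exfalso
        have hD : ∀ y : Fin n → Bool, y (B.label v) = false →
            c = decide (∃ u : Fin B.size, v ≤ u ∧ y (B.label u) = true) := by
          intro y hy
          rw [← evalFrom_sink B y hy hnext]
          exact IH hi' y
        have h0 := hD (fun _ => false) rfl
        have hne : B.label v ≠ B.label v' := fun h => by
          have := hoa h
          simp [hv, hv', Fin.ext_iff] at this
        have h1 := hD (fun j => decide (j = B.label v')) (by simpa using hne)
        rw [show (decide (∃ u : Fin B.size, v ≤ u ∧ (fun _ => false) (B.label u) = true)) = false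
          by simp] at h0
        rw [show (decide (∃ u : Fin B.size, v ≤ u ∧
            (fun j => decide (j = B.label v')) (B.label u) = true)) = true by
          simp; exact ⟨v', le_of_lt hvv', rfl⟩] at h1
        subst h0; exact absurd h1 (by simp)
      | inl w =>
        have hvw : v < w := B.wf v false w hnext
        have hD : ∀ y : Fin n → Bool,
            B.evalFrom y w = decide (∃ u : Fin B.size, v < u ∧ y (B.label u) = true) := by
          intro y
          classical
          set yy := Function.update y (B.label v) false with hyy
          have hyyv : yy (B.label v) = false := Function.update_self _ _ _
          have h1 : B.evalFrom yy v = B.evalFrom yy w := evalFrom_step B yy hyyv hnext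
          have h2 : B.evalFrom yy w = B.evalFrom y w := by
            apply evalFrom_congr
            intro u hu
            have hune : B.label u ≠ B.label v := fun h => by
              have := hoa h
              subst this
              exact absurd (lt_of_lt_of_le hvw hu) (lt_irrefl _)
            exact Function.update_of_ne hune _ _
          have h3 := IH hi' yy
          rw [h1, h2] at h3
          rw [h3]
          congr 1
          apply propext
          constructor
          · rintro ⟨u, hu, hyu⟩
            have hune : u ≠ v := fun h => by rw [h, hyyv] at hyu; exact absurd hyu (by simp)
            have hvu : v < u := lt_of_le_of_ne hu (Ne.symm hune)
            refine ⟨u, hvu, ?_⟩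
            rwa [hyy, Function.update_of_ne (fun h => hune (hoa h)) _ _] at hyu
          · rintro ⟨u, hu, hyu⟩
            refine ⟨u, le_of_lt hu, ?_⟩
            have hune : u ≠ v := ne_of_gt hu
            rwa [hyy, Function.update_of_ne (fun h => hune (hoa h)) _ _]
        have hwv' : w = v' := by
          by_contra hne
          have hwgt : i + 1 < w.val := by
            have h1 : i < w.val := hvw
            have h2 : w.val ≠ i + 1 := fun h => hne (Fin.ext h)
            omega
          have e1 : B.evalFrom (fun j => decide (j = B.label v')) w
              = B.evalFrom (fun _ => false) w := by
            apply evalFrom_congr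
            intro u hu
            have huv : u ≠ v' := by
              intro h
              have hw2 : w.val ≤ u.val := hu
              rw [h] at hw2
              simp [hv'] at hw2
              omega
            simpa using fun h => huv (hoa h)
          rw [hD, hD] at e1
          rw [show (decide (∃ u : Fin B.size, v < u ∧
              (fun j => decide (j = B.label v')) (B.label u) = true)) = true by
            simp; exact ⟨v', hvv', rfl⟩] at e1
          rw [show (decide (∃ u : Fin B.size, v < u ∧ (fun _ => false) (B.label u) = true))
              = false by simp] at e1
          exact absurd e1 (by simp)
        have hstep : ∀ y : Fin n → Bool, y (B.label v) = false →
            B.evalFrom y v = B.evalFrom y w := fun y hy => evalFrom_step B y hy hnext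
        rw [← hwv', hD x]
        have hw1 : w.val = i + 1 := by rw [hwv']
        have hv0 : v.val = i := rfl
        congr 1
        apply propext
        constructor
        · rintro ⟨u, hu, hxu⟩
          refine ⟨u, ?_, hxu⟩
          have h1 : v.val < u.val := hu
          exact Fin.le_def.mpr (by omega)
        · rintro ⟨u, hu, hxu⟩
          refine ⟨u, ?_, hxu⟩
          have h1 : w.val ≤ u.val := hu
          exact Fin.lt_def.mpr (by omega)
  intro v x
  have := C v.val v.isLt x
  simpa using this

end BP

/-- in an oaBP computing `⋁ᵢ zᵢ`, every node `v` reachable from the source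
computes `⋁_{i ∈ S(v)} z i`, where `S(v)` is the set of variables labelling the nodes not
preceding `v` in the topological order; in particular, over reachable nodes these sets
form a chain under inclusion. -/
theorem oaBP_structure_bigOr (n : ℕ) (B : BP n) (hoa : B.IsOA)
    (hcomp : B.Computes (bigOr n)) :
    (∀ v : Fin B.size, B.ReachableNode v →
        ∀ x, B.evalFrom x v = decide (∃ u : Fin B.size, v ≤ u ∧ x (B.label u) = true)) ∧
      ∀ v w : Fin B.size, B.ReachableNode v → B.ReachableNode w →
        {a : Fin n | ∃ u, v ≤ u ∧ B.label u = a} ⊆ {a : Fin n | ∃ u, w ≤ u ∧ B.label u = a} ∨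
          {a : Fin n | ∃ u, w ≤ u ∧ B.label u = a} ⊆ {a : Fin n | ∃ u, v ≤ u ∧ B.label u = a} := by
  constructor
  · intro v _ x
    exact B.main_structure hoa hcomp v x
  · intro v w _ _
    rcases le_total v w with h | h
    · exact Or.inr (fun a ⟨u, hu, hl⟩ => ⟨u, h.trans hu, hl⟩)
    · exact Or.inl (fun a ⟨u, hu, hl⟩ => ⟨u, h.trans hu, hl⟩)
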